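/- arXiv:2306.12204 — 3 statements merged into one kernel-verified Lean document; each statement's English description precedes it below -/
import Mathlib

section
/- Let W_n, W be bounded connected open subsets of ℂ^N with 0 ∈ W_n for all n and 0 ∈ W. If d_H(closure(W_n), closure(W)) → 0 and d_H(∂W_n, ∂W) → 0 as n → ∞ (where d_H denotes Hausdorff distance), then W = ker((W_n)), i.e. W equals the union over n of the connected component containing 0 of the interior of ⋂_{k ≥ n} W_k. -/
open Filter Metric Topology Set

/-- The kernel of a sequence of open sets: the union over `n` of the connected
component containing `0` of the interior of `⋂ k ≥ n, W k`. -/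
def seqKernel {X : Type*} [TopologicalSpace X] [Zero X] (W : ℕ → Set X) : Set X :=
  ⋃ n, connectedComponentIn (interior (⋂ k, ⋂ (_ : n ≤ k), W k)) 0

/-- A preconnected set meeting an open set `t` and its complement meets `frontier t`. -/
lemma preconn_inter_frontier {X : Type*} [TopologicalSpace X] {s t : Set X}
    (hs : IsPreconnected s) (ht : IsOpen t) (h1 : (s ∩ t).Nonempty)
    (h2 : (s \ t).Nonempty) : (s ∩ frontier t).Nonempty := by
  by_contra h
  rw [not_nonempty_iff_eq_empty] at h
  have hfr : ∀ z ∈ s, z ∉ t → z ∉ closure t := by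
    intro z hz hzt hzc
    have hzf : z ∈ frontier t := by
      rw [ht.frontier_eq]; exact ⟨hzc, hzt⟩
    exact eq_empty_iff_forall_notMem.mp h z ⟨hz, hzf⟩
  have hsub : s ⊆ t ∪ (closure t)ᶜ := by
    intro z hz
    by_cases hzt : z ∈ t
    · exact Or.inl hzt
    · exact Or.inr (hfr z hz hzt)
  obtain ⟨x2, hx2s, hx2⟩ := h2
  obtain ⟨z, hzs, hzt, hzc⟩ := hs t (closure t)ᶜ ht isClosed_closure.isOpen_compl hsub h1
    ⟨x2, hx2s, hfr x2 hx2s hx2⟩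
  exact hzc (subset_closure hzt)

/-- If bounded connected open sets `W n` (containing `0`) converge to a bounded
connected open set `W₀` (containing `0`) in the Hausdorff sense, then `W₀` is the
kernel of the sequence `(W n)`. -/
theorem kernel_eq_of_hausdorff_convergence (N : ℕ)
    (W : ℕ → Set (EuclideanSpace ℂ (Fin N))) (W₀ : Set (EuclideanSpace ℂ (Fin N)))
    (hWopen : ∀ n, IsOpen (W n)) (hWconn : ∀ n, IsConnected (W n))
    (hWbdd : ∀ n, Bornology.IsBounded (W n))
    (h0 : ∀ n, (0 : EuclideanSpace ℂ (Fin N)) ∈ W n)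
    (hW₀open : IsOpen W₀) (hW₀conn : IsConnected W₀)
    (hW₀bdd : Bornology.IsBounded W₀)
    (h0W₀ : (0 : EuclideanSpace ℂ (Fin N)) ∈ W₀)
    (hcl : Tendsto (fun n => hausdorffDist (closure (W n)) (closure W₀)) atTop (nhds 0))
    (hbd : Tendsto (fun n => hausdorffDist (frontier (W n)) (frontier W₀)) atTop (nhds 0)) :
    W₀ = seqKernel W := by
  rcases subsingleton_or_nontrivial (EuclideanSpace ℂ (Fin N)) with hsub | hnt
  · -- degenerate case : the space is a single point
    have huniv : ∀ s : Set (EuclideanSpace ℂ (Fin N)), (0 : EuclideanSpace ℂ (Fin N)) ∈ s → s = univ := fun s hs =>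
      eq_univ_of_forall fun z => by rwa [Subsingleton.elim z (0 : EuclideanSpace ℂ (Fin N))]
    rw [huniv W₀ h0W₀]
    symm
    apply eq_univ_of_forall
    intro z
    have hIu : (⋂ k, ⋂ (_ : (0:ℕ) ≤ k), W k) = univ := by
      apply eq_univ_of_forall
      intro w
      simp only [mem_iInter]
      intro k _
      rw [huniv (W k) (h0 k)]
      trivial
    have h0' : (0 : EuclideanSpace ℂ (Fin N)) ∈ interior (⋂ k, ⋂ (_ : (0:ℕ) ≤ k), W k) := by
      rw [hIu, interior_univ]; trivial
    have hz : z ∈ connectedComponentIn (interior (⋂ k, ⋂ (_ : (0:ℕ) ≤ k), W k)) 0 := by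
      rw [Subsingleton.elim z (0 : EuclideanSpace ℂ (Fin N))]
      exact mem_connectedComponentIn h0'
    exact mem_iUnion.mpr ⟨0, hz⟩
  -- main case
  have hWne : ∀ k, (W k).Nonempty := fun k => ⟨0, h0 k⟩
  have hW₀ne : W₀.Nonempty := ⟨0, h0W₀⟩
  have hWnuniv : ∀ k, W k ≠ univ := fun k h =>
    NormedSpace.unbounded_univ ℝ (EuclideanSpace ℂ (Fin N)) (h ▸ hWbdd k)
  have hW₀nuniv : W₀ ≠ univ := fun h => NormedSpace.unbounded_univ ℝ (EuclideanSpace ℂ (Fin N)) (h ▸ hW₀bdd)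
  have hfrWne : ∀ k, (frontier (W k)).Nonempty := fun k =>
    nonempty_frontier_iff.mpr ⟨hWne k, hWnuniv k⟩
  have hfrW₀ne : (frontier W₀).Nonempty := nonempty_frontier_iff.mpr ⟨hW₀ne, hW₀nuniv⟩
  have hfrWbdd : ∀ k, Bornology.IsBounded (frontier (W k)) := fun k =>
    ((hWbdd k).closure).subset frontier_subset_closure
  have hfrW₀bdd : Bornology.IsBounded (frontier W₀) :=
    hW₀bdd.closure.subset frontier_subset_closure
  have hfinfr : ∀ k, EMetric.hausdorffEdist (frontier (W k)) (frontier W₀) ≠ ⊤ := fun k =>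
    hausdorffEdist_ne_top_of_nonempty_of_bounded (hfrWne k) hfrW₀ne (hfrWbdd k) hfrW₀bdd
  have hfincl : ∀ k, EMetric.hausdorffEdist (closure (W k)) (closure W₀) ≠ ⊤ := fun k =>
    hausdorffEdist_ne_top_of_nonempty_of_bounded (hWne k).closure hW₀ne.closure
      (hWbdd k).closure hW₀bdd.closure
  ext x
  constructor
  · -- W₀ ⊆ seqKernel W
    intro hx
    obtain ⟨γ, hγ⟩ := ((hW₀open.isConnected_iff_isPathConnected).mp hW₀conn).joinedIn 0 h0W₀ x hx
    set K := range γ with hKdef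
    have hKcomp : IsCompact K := isCompact_range γ.continuous
    have hKW₀ : K ⊆ W₀ := range_subset_iff.mpr hγ
    have h0K : (0 : EuclideanSpace ℂ (Fin N)) ∈ K := ⟨0, γ.source⟩
    have hxK : x ∈ K := ⟨1, γ.target⟩
    obtain ⟨δ, δpos, hδ⟩ := hKcomp.exists_cthickening_subset_open hW₀open hKW₀
    have h1 : ∀ᶠ k in atTop, hausdorffDist (closure (W k)) (closure W₀) < δ/4 :=
      hcl.eventually (gt_mem_nhds (by positivity))
    have h2 : ∀ᶠ k in atTop, hausdorffDist (frontier (W k)) (frontier W₀) < δ/4 :=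
      hbd.eventually (gt_mem_nhds (by positivity))
    obtain ⟨n, hn⟩ := eventually_atTop.mp (h1.and h2)
    have hkey : ∀ k, n ≤ k → cthickening (δ/2) K ⊆ W k := by
      intro k hk y hy
      obtain ⟨hcl', hbd'⟩ := hn k hk
      obtain ⟨p, hpK, hyp⟩ : ∃ p ∈ K, dist y p ≤ δ/2 := by
        rw [hKcomp.cthickening_eq_biUnion_closedBall (by positivity)] at hy
        obtain ⟨p, hp, hyp⟩ := mem_iUnion₂.mp hy
        exact ⟨p, hp, mem_closedBall.mp hyp⟩
      have hyW₀ : y ∈ W₀ := hδ (cthickening_mono (by linarith) K hy)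
      have hA : ∀ z' ∈ frontier W₀, δ/2 ≤ dist y z' := by
        intro z' hz'
        by_contra hlt
        push_neg at hlt
        have hz'mem : z' ∈ cthickening δ K := by
          rw [hKcomp.cthickening_eq_biUnion_closedBall δpos.le]
          refine mem_iUnion₂.mpr ⟨p, hpK, mem_closedBall.mpr ?_⟩
          calc dist z' p ≤ dist z' y + dist y p := dist_triangle _ _ _
            _ ≤ δ/2 + δ/2 := by rw [dist_comm z' y]; linarith
            _ = δ := by ring
        have hz'W₀ : z' ∈ W₀ := hδ hz'mem
        rw [hW₀open.frontier_eq] at hz'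
        exact hz'.2 hz'W₀
      have hB : infDist y (W k) < δ/4 := by
        have hle : infDist y (closure (W k)) ≤ hausdorffDist (closure W₀) (closure (W k)) :=
          infDist_le_hausdorffDist_of_mem (subset_closure hyW₀)
            (by rw [EMetric.hausdorffEdist_comm]; exact hfincl k)
        rw [infDist_closure] at hle
        rw [hausdorffDist_comm] at hle
        exact lt_of_le_of_lt hle hcl'
      obtain ⟨w, hwW, hyw⟩ := (infDist_lt_iff (hWne k)).mp hB
      have hC : ∀ z ∈ frontier (W k), δ/4 ≤ dist y z := by
        intro z hz
        have hzd : infDist z (frontier W₀) < δ/4 :=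
          lt_of_le_of_lt (infDist_le_hausdorffDist_of_mem hz (hfinfr k)) hbd'
        obtain ⟨z', hz', hzz'⟩ := (infDist_lt_iff hfrW₀ne).mp hzd
        have hAz := hA z' hz'
        have htri : dist y z' ≤ dist y z + dist z z' := dist_triangle _ _ _
        linarith
      by_contra hynW
      obtain ⟨z, hzseg, hzfr⟩ := preconn_inter_frontier (convex_segment w y).isPreconnected
        (hWopen k) ⟨w, left_mem_segment ℝ w y, hwW⟩ ⟨y, right_mem_segment ℝ w y, hynW⟩
      have hd := dist_add_dist_of_mem_segment hzseg
      have hCz := hC z hzfr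
      rw [dist_comm y z] at hCz
      rw [dist_comm y w] at hyw
      have hnn : (0:ℝ) ≤ dist w z := dist_nonneg
      linarith
    refine mem_iUnion.mpr ⟨n, ?_⟩
    have hKsub : K ⊆ interior (⋂ k, ⋂ (_ : n ≤ k), W k) := by
      have hsub : thickening (δ/2) K ⊆ ⋂ k, ⋂ (_ : n ≤ k), W k := by
        intro y hy
        simp only [mem_iInter]
        intro k hk
        exact hkey k hk (thickening_subset_cthickening _ _ hy)
      exact (self_subset_thickening (by positivity) K).trans
        (interior_maximal hsub isOpen_thickening)
    exact (isConnected_range γ.continuous).isPreconnected.subset_connectedComponentIn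
      h0K hKsub hxK
  · -- seqKernel W ⊆ W₀
    intro hx
    obtain ⟨n, hx⟩ := mem_iUnion.mp hx
    by_contra hxW₀
    have h0int : (0 : EuclideanSpace ℂ (Fin N)) ∈ interior (⋂ k, ⋂ (_ : n ≤ k), W k) :=
      connectedComponentIn_nonempty_iff.mp ⟨x, hx⟩
    obtain ⟨y, hyC, hyfr⟩ := preconn_inter_frontier isPreconnected_connectedComponentIn
      hW₀open ⟨0, mem_connectedComponentIn h0int, h0W₀⟩ ⟨x, hx, hxW₀⟩
    have hyint : y ∈ interior (⋂ k, ⋂ (_ : n ≤ k), W k) :=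
      connectedComponentIn_subset _ _ hyC
    obtain ⟨r, rpos, hr⟩ := Metric.isOpen_iff.mp isOpen_interior y hyint
    obtain ⟨m, hm⟩ := eventually_atTop.mp (hbd.eventually (gt_mem_nhds rpos))
    set k := max n m with hkdef
    have hball : ball y r ⊆ W k := by
      intro z hz
      have hz' := interior_subset (hr hz)
      simp only [mem_iInter] at hz'
      exact hz' k (le_max_left n m)
    have h1 : infDist y (frontier (W k)) < r := by
      have hle := infDist_le_hausdorffDist_of_mem hyfr
        (by rw [EMetric.hausdorffEdist_comm]; exact hfinfr k)
      rw [hausdorffDist_comm] at hle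
      exact lt_of_le_of_lt hle (hm k (le_max_right n m))
    obtain ⟨z, hzfr, hyz⟩ := (infDist_lt_iff (hfrWne k)).mp h1
    have hzW : z ∈ W k := hball (mem_ball.mpr (by rwa [dist_comm]))
    rw [(hWopen k).frontier_eq] at hzfr
    exact hzfr.2 hzW
end

section
/- Let W_n, W be bounded connected open subsets of ℂ^N with 0 ∈ W_n for all n and 0 ∈ W. If d_H(closure(W_n), closure(W)) → 0 and d_H(∂W_n, ∂W) → 0, then (W_n) converges to W in the kernel sense: for every strictly increasing map σ : ℕ → ℕ, the kernel of the subsequence (W_{σ(n)}) equals W. -/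
open Filter Metric Topology Set

/-!
A point of `∂W₀` is a limit of points of `∂W k ⊆ (W k)ᶜ`, so no ball around it lies in all late
`W k`: the component of `0` in the interior of `⋂ k ≥ n, W k` cannot cross `∂W₀`, hence stays in
`W₀`. Conversely, a point `z ∈ W₀` is joined to `0` by a connected open set `U` lying at positive
distance from `∂W₀`; eventually `∂W k` avoids `U`, so the connected set `U`, which meets `W k` at
`0`, lies in every late `W k`.
-/

theorem IsPreconnected.subset_of_disjoint_frontier {X : Type*} [TopologicalSpace X]
    {S A : Set X} (hS : IsPreconnected S) (hA : IsOpen A) (hmeet : (S ∩ A).Nonempty)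
    (hdisj : Disjoint S (frontier A)) : S ⊆ A := by
  refine hS.subset_of_closure_inter_subset hA hmeet fun x ⟨hxA, hxS⟩ => ?_
  rw [closure_eq_self_union_frontier] at hxA
  exact hxA.resolve_right (disjoint_left.mp hdisj hxS)

theorem IsPreconnected.thickening {E : Type*} [SeminormedAddCommGroup E] [NormedSpace ℝ E]
    {K : Set E} (hK : IsPreconnected K) (δ : ℝ) : IsPreconnected (thickening δ K) := by
  rcases K.eq_empty_or_nonempty with rfl | ⟨x, hx⟩
  · simpa using isPreconnected_empty
  refine isPreconnected_of_forall x fun y hy => ?_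
  obtain ⟨z, hzK, hyz⟩ := mem_thickening_iff.mp hy
  have hδ : 0 < δ := dist_nonneg.trans_lt hyz
  refine ⟨K ∪ ball z δ, union_subset (self_subset_thickening hδ K) (ball_subset_thickening hzK δ),
    Or.inl hx, Or.inr hyz, ?_⟩
  exact hK.union z hzK (mem_ball_self hδ) (convex_ball z δ).isPreconnected

theorem IsOpen.exists_isPreconnected_thickening_subset {E : Type*} [NormedAddCommGroup E]
    [NormedSpace ℝ E] {W : Set E} (hW : IsOpen W) (hWc : IsConnected W) {x y : E}
    (hx : x ∈ W) (hy : y ∈ W) :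
    ∃ U, IsOpen U ∧ IsPreconnected U ∧ x ∈ U ∧ y ∈ U ∧ ∃ δ > 0, thickening δ U ⊆ W := by
  obtain ⟨γ, hγ⟩ := (hW.isConnected_iff_isPathConnected.mp hWc).joinedIn x hx y hy
  obtain ⟨δ, hδ, hK⟩ := (isCompact_range γ.continuous).exists_thickening_subset_open hW
    (range_subset_iff.mpr hγ)
  have hKU : range γ ⊆ thickening (δ / 2) (range γ) := self_subset_thickening (by positivity) _
  refine ⟨thickening (δ / 2) (range γ), isOpen_thickening,
    (isConnected_range γ.continuous).isPreconnected.thickening _,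
    hKU ⟨0, γ.source⟩, hKU ⟨1, γ.target⟩, δ / 2, by positivity, ?_⟩
  calc thickening (δ / 2) (thickening (δ / 2) (range γ))
      ⊆ thickening (δ / 2 + δ / 2) (range γ) := thickening_thickening_subset _ _ _
    _ = thickening δ (range γ) := by rw [add_halves]
    _ ⊆ W := hK

theorem hausdorffEDist_frontier_ne_top {E : Type*} [NormedAddCommGroup E] [NormedSpace ℝ E]
    {S T : Set E} (hS : S.Nonempty) (hT : T.Nonempty) (hSb : Bornology.IsBounded S)
    (hTb : Bornology.IsBounded T) : hausdorffEDist (frontier S) (frontier T) ≠ ⊤ := by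
  rcases subsingleton_or_nontrivial E with hE | hE
  · rw [hS.eq_univ, hT.eq_univ, hausdorffEDist_self]
    exact ENNReal.zero_ne_top
  have hfr {A : Set E} (hA : A.Nonempty) (hAb : Bornology.IsBounded A) :
      (frontier A).Nonempty :=
    nonempty_frontier_iff.mpr ⟨hA, fun h => NormedSpace.unbounded_univ ℝ E (h ▸ hAb)⟩
  exact hausdorffEDist_ne_top_of_nonempty_of_bounded (hfr hS hSb) (hfr hT hTb)
    (hSb.closure.subset frontier_subset_closure) (hTb.closure.subset frontier_subset_closure)

section HausdorffConvergence

variable {ι X : Type*} [PseudoMetricSpace X] {l : Filter ι} {F : ι → Set X} {F₀ : Set X}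

theorem eventually_exists_dist_lt_of_tendsto_hausdorffDist
    (hF : Tendsto (fun i => hausdorffDist (F i) F₀) l (𝓝 0))
    (hfin : ∀ i, hausdorffEDist (F i) F₀ ≠ ⊤) {p : X} (hp : p ∈ F₀) {r : ℝ} (hr : 0 < r) :
    ∀ᶠ i in l, ∃ q ∈ F i, dist q p < r := by
  filter_upwards [hF.eventually (gt_mem_nhds hr)] with i hi
  exact exists_dist_lt_of_hausdorffDist_lt' hp hi (hfin i)

theorem eventually_disjoint_of_tendsto_hausdorffDist
    (hF : Tendsto (fun i => hausdorffDist (F i) F₀) l (𝓝 0))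
    (hfin : ∀ i, hausdorffEDist (F i) F₀ ≠ ⊤) {U : Set X} {δ : ℝ} (hδ : 0 < δ)
    (hU : Disjoint (thickening δ U) F₀) : ∀ᶠ i in l, Disjoint U (F i) := by
  filter_upwards [hF.eventually (gt_mem_nhds hδ)] with i hi
  refine disjoint_left.mpr fun q hqU hqF => ?_
  obtain ⟨p, hp, hqp⟩ := exists_dist_lt_of_hausdorffDist_lt hqF hi (hfin i)
  exact disjoint_right.mp hU hp (mem_thickening_iff.mpr ⟨q, hqU, by rwa [dist_comm]⟩)

end HausdorffConvergence

theorem seqKernel_subset_of_tendsto_hausdorffDist_frontier {X : Type*} [PseudoMetricSpace X]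
    [Zero X] {W : ℕ → Set X} {W₀ : Set X} (hW : ∀ k, IsOpen (W k))
    (hW₀ : IsOpen W₀) (h0 : (0 : X) ∈ W₀)
    (hF : Tendsto (fun k => hausdorffDist (frontier (W k)) (frontier W₀)) atTop (𝓝 0))
    (hfin : ∀ k, hausdorffEDist (frontier (W k)) (frontier W₀) ≠ ⊤) : seqKernel W ⊆ W₀ := by
  intro z hz
  obtain ⟨n, hzV⟩ := mem_iUnion.mp hz
  set T := interior (⋂ k, ⋂ (_ : n ≤ k), W k)
  have hVT : connectedComponentIn T 0 ⊆ T := connectedComponentIn_subset _ _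
  have h0V : (0 : X) ∈ connectedComponentIn T 0 :=
    mem_connectedComponentIn (connectedComponentIn_nonempty_iff.mp ⟨z, hzV⟩)
  suffices Disjoint (connectedComponentIn T 0) (frontier W₀) from
    isPreconnected_connectedComponentIn.subset_of_disjoint_frontier hW₀ ⟨0, h0V, h0⟩ this hzV
  refine disjoint_left.mpr fun p hpV hp => ?_
  obtain ⟨r, hr, hball⟩ := isOpen_iff.mp isOpen_interior p (hVT hpV)
  obtain ⟨k, ⟨q, hq, hqp⟩, hnk⟩ :=
    ((eventually_exists_dist_lt_of_tendsto_hausdorffDist hF hfin hp hr).and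
      (eventually_ge_atTop n)).exists
  have hqW : q ∈ W k := mem_iInter₂.mp (interior_subset (hball hqp)) k hnk
  exact disjoint_left.mp (disjoint_frontier_iff_isOpen.mpr (hW k)) hq hqW

theorem subset_seqKernel_of_tendsto_hausdorffDist_frontier {E : Type*} [NormedAddCommGroup E]
    [NormedSpace ℝ E] {W : ℕ → Set E} {W₀ : Set E} (hW : ∀ k, IsOpen (W k))
    (h0 : ∀ k, (0 : E) ∈ W k) (hW₀ : IsOpen W₀) (hW₀c : IsConnected W₀) (h0W₀ : (0 : E) ∈ W₀)
    (hF : Tendsto (fun k => hausdorffDist (frontier (W k)) (frontier W₀)) atTop (𝓝 0))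
    (hfin : ∀ k, hausdorffEDist (frontier (W k)) (frontier W₀) ≠ ⊤) : W₀ ⊆ seqKernel W := by
  intro z hz
  obtain ⟨U, hUo, hUc, h0U, hzU, δ, hδ, hUW₀⟩ :=
    hW₀.exists_isPreconnected_thickening_subset hW₀c h0W₀ hz
  have hUfr : Disjoint (thickening δ U) (frontier W₀) :=
    (disjoint_frontier_iff_isOpen.mpr hW₀).symm.mono_left hUW₀
  obtain ⟨n, hn⟩ := eventually_atTop.mp
    (eventually_disjoint_of_tendsto_hausdorffDist hF hfin hδ hUfr)
  have hUT : U ⊆ interior (⋂ k, ⋂ (_ : n ≤ k), W k) :=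
    interior_maximal (subset_iInter₂ fun k hk =>
      hUc.subset_of_disjoint_frontier (hW k) ⟨0, h0U, h0 k⟩ (hn k hk)) hUo
  exact mem_iUnion.mpr ⟨n, hUc.subset_connectedComponentIn h0U hUT hzU⟩

theorem kernel_convergence_of_hausdorff_convergence_general (N : ℕ)
    (W : ℕ → Set (EuclideanSpace ℂ (Fin N))) (W₀ : Set (EuclideanSpace ℂ (Fin N)))
    (hWopen : ∀ n, IsOpen (W n))
    (hWbdd : ∀ n, Bornology.IsBounded (W n))
    (h0 : ∀ n, (0 : EuclideanSpace ℂ (Fin N)) ∈ W n)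
    (hW₀open : IsOpen W₀) (hW₀conn : IsConnected W₀)
    (hW₀bdd : Bornology.IsBounded W₀)
    (h0W₀ : (0 : EuclideanSpace ℂ (Fin N)) ∈ W₀)
    (hbd : Tendsto (fun n => hausdorffDist (frontier (W n)) (frontier W₀)) atTop (nhds 0)) :
    ∀ σ : ℕ → ℕ, StrictMono σ → seqKernel (fun k => W (σ k)) = W₀ := by
  intro σ hσ
  have hF := hbd.comp hσ.tendsto_atTop
  have hfin k : hausdorffEDist (frontier (W (σ k))) (frontier W₀) ≠ ⊤ :=
    hausdorffEDist_frontier_ne_top ⟨0, h0 (σ k)⟩ ⟨0, h0W₀⟩ (hWbdd (σ k)) hW₀bdd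
  exact (seqKernel_subset_of_tendsto_hausdorffDist_frontier (fun k => hWopen (σ k)) hW₀open
    h0W₀ hF hfin).antisymm
    (subset_seqKernel_of_tendsto_hausdorffDist_frontier (fun k => hWopen (σ k))
      (fun k => h0 (σ k)) hW₀open hW₀conn h0W₀ hF hfin)

/-- If bounded connected open sets `W n` (containing `0`) converge to a bounded
connected open set `W₀` (containing `0`) in the Hausdorff sense, then `(W n)`
converges to `W₀` in the kernel sense: every subsequence has kernel `W₀`. -/
theorem kernel_convergence_of_hausdorff_convergence (N : ℕ)
    (W : ℕ → Set (EuclideanSpace ℂ (Fin N))) (W₀ : Set (EuclideanSpace ℂ (Fin N)))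
    (hWopen : ∀ n, IsOpen (W n)) (hWconn : ∀ n, IsConnected (W n))
    (hWbdd : ∀ n, Bornology.IsBounded (W n))
    (h0 : ∀ n, (0 : EuclideanSpace ℂ (Fin N)) ∈ W n)
    (hW₀open : IsOpen W₀) (hW₀conn : IsConnected W₀)
    (hW₀bdd : Bornology.IsBounded W₀)
    (h0W₀ : (0 : EuclideanSpace ℂ (Fin N)) ∈ W₀)
    (hcl : Tendsto (fun n => hausdorffDist (closure (W n)) (closure W₀)) atTop (nhds 0))
    (hbd : Tendsto (fun n => hausdorffDist (frontier (W n)) (frontier W₀)) atTop (nhds 0)) :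
    ∀ σ : ℕ → ℕ, StrictMono σ → seqKernel (fun k => W (σ k)) = W₀ :=
  kernel_convergence_of_hausdorff_convergence_general N W W₀ hWopen hWbdd h0 hW₀open hW₀conn hW₀bdd
    h0W₀ hbd
end

section
/- Let U ⊆ ℂ be a bounded open set and let (W_n) be a sequence of open subsets of U with 0 ∈ W_n for all n, and let W = ker((W_n)) be the kernel of the sequence. Then for every p ∈ W, liminf_{n→∞} η_{W_n}(p) ≥ η_W(p). (This is Proposition 1.5 of the paper for the trivial single-leaf nonsingular foliation of a bounded plane domain.) -/
open Filter Metric Topology Set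

/-- The modulus-of-uniformization function of a plane domain `Ω` (for the trivial
single-leaf foliation): the supremum of `|f'(0)|` over holomorphic maps
`f : 𝔻 → Ω` with `f 0 = p` (with `sSup ∅ = 0`). -/
noncomputable def eta (Ω : Set ℂ) (p : ℂ) : ℝ :=
  sSup {r : ℝ | ∃ f : ℂ → ℂ, DifferentiableOn ℂ f (ball (0 : ℂ) 1) ∧ f 0 = p ∧
    (∀ z ∈ ball (0 : ℂ) 1, f z ∈ Ω) ∧ r = ‖deriv f 0‖}

/-!
A competitor `f : 𝔻 → W₀` for `η_{W₀}(p)` is first shrunk to `z ↦ f (r z)` with `r < 1`.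
Its image `f (closedBall 0 r)` is compact, and the stages of the kernel form an increasing open
cover of `W₀` whose `n`-th stage lies in every `W k` with `k ≥ n`; so the shrunk map is a
competitor for `η_{W k}(p)` for all large `k`, giving `r ‖f'(0)‖ ≤ liminf η_{W k}(p)`.
Letting `r → 1` concludes. The Schwarz lemma bounds all the `η_{W k}(p)` uniformly, which makes
the suprema and the liminf meaningful.
-/

section Kernel

variable {X : Type*} [TopologicalSpace X] [Zero X] (W : ℕ → Set X)

def kernelStage (n : ℕ) : Set X :=
  connectedComponentIn (interior (⋂ k, ⋂ (_ : n ≤ k), W k)) 0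

theorem seqKernel_eq_iUnion_kernelStage : seqKernel W = ⋃ n, kernelStage W n := rfl

theorem isOpen_kernelStage [LocallyConnectedSpace X] (n : ℕ) : IsOpen (kernelStage W n) :=
  isOpen_interior.connectedComponentIn

theorem kernelStage_subset {n k : ℕ} (hnk : n ≤ k) : kernelStage W n ⊆ W k := fun _ hx =>
  mem_iInter₂.mp (interior_subset (connectedComponentIn_subset _ _ hx)) k hnk

theorem monotone_kernelStage : Monotone (kernelStage W) := fun _ _ hnm =>
  connectedComponentIn_mono _ <| interior_mono <|
    iInter₂_mono' fun k hmk => ⟨k, hnm.trans hmk, subset_rfl⟩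

variable {W} in
theorem IsCompact.eventually_subset_of_subset_seqKernel [LocallyConnectedSpace X] {K : Set X}
    (hK : IsCompact K) (hKW : K ⊆ seqKernel W) : ∀ᶠ k in atTop, K ⊆ W k := by
  obtain ⟨N, hN⟩ := hK.elim_directed_cover (kernelStage W) (isOpen_kernelStage W)
    (hKW.trans (seqKernel_eq_iUnion_kernelStage W).subset)
    (monotone_kernelStage W).directed_le
  filter_upwards [eventually_ge_atTop N] with k hk
  exact hN.trans (kernelStage_subset W hk)

end Kernel

theorem eta_nonneg (Ω : Set ℂ) (p : ℂ) : 0 ≤ eta Ω p :=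
  Real.sSup_nonneg <| by rintro _ ⟨f, -, -, -, rfl⟩; exact norm_nonneg _

theorem eta_le {Ω : Set ℂ} {p : ℂ} {c : ℝ} (hc : 0 ≤ c)
    (h : ∀ f : ℂ → ℂ, DifferentiableOn ℂ f (ball 0 1) → f 0 = p → MapsTo f (ball 0 1) Ω →
      ‖deriv f 0‖ ≤ c) :
    eta Ω p ≤ c :=
  Real.sSup_le (by rintro _ ⟨f, hf, hfp, hmaps, rfl⟩; exact h f hf hfp hmaps) hc

theorem norm_deriv_le_two_mul_of_mapsTo_ball {f : ℂ → ℂ} {R : ℝ}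
    (hf : DifferentiableOn ℂ f (ball 0 1)) (hmaps : MapsTo f (ball 0 1) (ball 0 R)) :
    ‖deriv f 0‖ ≤ 2 * R := by
  have hmaps' : MapsTo f (ball 0 1) (closedBall (f 0) (2 * R)) := fun z hz => by
    have hfz := mem_ball_zero_iff.mp (hmaps hz)
    have hf0 := mem_ball_zero_iff.mp (hmaps (mem_ball_self one_pos))
    rw [mem_closedBall, dist_eq_norm]
    linarith [norm_sub_le (f z) (f 0)]
  simpa using Complex.norm_deriv_le_div_of_mapsTo_ball hf hmaps' one_pos

theorem eta_le_two_mul_of_subset_ball {Ω : Set ℂ} {R : ℝ} (hR : 0 ≤ R) (hΩ : Ω ⊆ ball 0 R)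
    (p : ℂ) : eta Ω p ≤ 2 * R :=
  eta_le (by positivity) fun _ hf _ hmaps =>
    norm_deriv_le_two_mul_of_mapsTo_ball hf (hmaps.mono_right hΩ)

theorem norm_deriv_le_eta {Ω : Set ℂ} (hΩ : Bornology.IsBounded Ω) {f : ℂ → ℂ}
    (hf : DifferentiableOn ℂ f (ball 0 1)) (hmaps : MapsTo f (ball 0 1) Ω) :
    ‖deriv f 0‖ ≤ eta Ω (f 0) := by
  obtain ⟨R, -, hΩR⟩ := hΩ.subset_ball_lt 0 0
  refine le_csSup ⟨2 * R, ?_⟩ ⟨f, hf, rfl, hmaps, rfl⟩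
  rintro _ ⟨g, hg, -, hgmaps, rfl⟩
  exact norm_deriv_le_two_mul_of_mapsTo_ball hg (MapsTo.mono_right hgmaps hΩR)

theorem mul_norm_deriv_le_eta_of_image_closedBall_subset {Ω : Set ℂ}
    (hΩ : Bornology.IsBounded Ω) {f : ℂ → ℂ} (hf : DifferentiableOn ℂ f (ball 0 1)) {r : ℝ}
    (hr₀ : 0 ≤ r) (hr₁ : r < 1) (hfΩ : f '' closedBall 0 r ⊆ Ω) :
    r * ‖deriv f 0‖ ≤ eta Ω (f 0) := by
  have hscale : MapsTo (fun z : ℂ => (r : ℂ) * z) (ball 0 1) (closedBall 0 r) := fun z hz => by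
    rw [mem_closedBall_zero_iff, norm_mul, Complex.norm_real, Real.norm_of_nonneg hr₀]
    exact mul_le_of_le_one_right hr₀ (mem_ball_zero_iff.mp hz).le
  have hg : DifferentiableOn ℂ (fun z => f (r * z)) (ball 0 1) :=
    hf.comp (differentiableOn_id.const_mul _) (hscale.mono_right (closedBall_subset_ball hr₁))
  have hderiv : deriv (fun z => f (r * z)) 0 = r * deriv f 0 := by
    simpa using deriv_comp_mul_left (r : ℂ) f 0
  have := norm_deriv_le_eta hΩ hg fun z hz => hfΩ (mem_image_of_mem f (hscale hz))
  simpa [hderiv, Real.norm_of_nonneg hr₀] using this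

theorem isBoundedUnder_le_eta {ι : Type*} {U : Set ℂ} (hU : Bornology.IsBounded U)
    {W : ι → Set ℂ} (hWU : ∀ i, W i ⊆ U) (l : Filter ι) (p : ℂ) :
    IsBoundedUnder (· ≤ ·) l fun i => eta (W i) p := by
  obtain ⟨R, hR, hUR⟩ := hU.subset_ball_lt 0 0
  exact isBoundedUnder_of ⟨2 * R, fun i => eta_le_two_mul_of_subset_ball hR.le
    ((hWU i).trans hUR) p⟩

theorem norm_deriv_le_liminf_eta {U : Set ℂ} (hU : Bornology.IsBounded U) {W : ℕ → Set ℂ}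
    (hWU : ∀ n, W n ⊆ U) {f : ℂ → ℂ} (hf : DifferentiableOn ℂ f (ball 0 1))
    (hmaps : MapsTo f (ball 0 1) (seqKernel W)) :
    ‖deriv f 0‖ ≤ liminf (fun n => eta (W n) (f 0)) atTop := by
  have hcobdd := (isBoundedUnder_le_eta hU hWU atTop (f 0)).isCoboundedUnder_ge
  have hscaled :
      ∀ r ∈ Ioo (0 : ℝ) 1, r * ‖deriv f 0‖ ≤ liminf (fun n => eta (W n) (f 0)) atTop := by
    rintro r ⟨hr₀, hr₁⟩
    have hK : IsCompact (f '' closedBall 0 r) := (isCompact_closedBall 0 r).image_of_continuousOn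
      (hf.continuousOn.mono (closedBall_subset_ball hr₁))
    refine le_liminf_of_le hcobdd ?_
    filter_upwards [hK.eventually_subset_of_subset_seqKernel
      (image_subset_iff.mpr (hmaps.mono_left (closedBall_subset_ball hr₁)))] with k hk
    exact mul_norm_deriv_le_eta_of_image_closedBall_subset (hU.subset (hWU k)) hf hr₀.le hr₁ hk
  have hlim : Tendsto (fun r : ℝ => r * ‖deriv f 0‖) (𝓝[<] 1) (𝓝 ‖deriv f 0‖) :=
    ((continuous_mul_const _).tendsto' 1 _ (one_mul _)).mono_left nhdsWithin_le_nhds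
  exact le_of_tendsto hlim (mem_of_superset (Ioo_mem_nhdsLT zero_lt_one) hscaled)

theorem eta_kernel_le_liminf_general (U : Set ℂ)
    (hUbdd : Bornology.IsBounded U)
    (W : ℕ → Set ℂ) (hWU : ∀ n, W n ⊆ U) :
    ∀ p ∈ seqKernel W, eta (seqKernel W) p ≤ liminf (fun n => eta (W n) p) atTop := by
  intro p _
  have hcobdd := (isBoundedUnder_le_eta hUbdd hWU atTop p).isCoboundedUnder_ge
  refine eta_le (le_liminf_of_le hcobdd (.of_forall fun n => eta_nonneg (W n) p)) ?_
  rintro f hf rfl hmaps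
  exact norm_deriv_le_liminf_eta hUbdd hWU hf hmaps

/-- Proposition 1.5 for the trivial single-leaf foliation of a bounded plane
domain: if `W₀` is the kernel of the sequence `(W n)` of open subsets of a
bounded open set `U`, then `liminf η_{W n} p ≥ η_{W₀} p` for all `p ∈ W₀`. -/
theorem eta_kernel_le_liminf (U : Set ℂ) (hUopen : IsOpen U)
    (hUbdd : Bornology.IsBounded U)
    (W : ℕ → Set ℂ) (hWopen : ∀ n, IsOpen (W n)) (hWU : ∀ n, W n ⊆ U)
    (h0 : ∀ n, (0 : ℂ) ∈ W n) :
    ∀ p ∈ seqKernel W, eta (seqKernel W) p ≤ liminf (fun n => eta (W n) p) atTop :=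
  eta_kernel_le_liminf_general U hUbdd W hWU
end
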